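/- arXiv:2008.03360 — 7 statements merged into one kernel-verified Lean document; each statement's English description precedes it below -/
import Mathlib

section
/- Let X be a set with a scale 𝒰 (a cover of X). Suppose that for every V ⊆ X there exists a 𝒰-net of V of cardinality at most n. Then every st(𝒰,𝒰)-net of V has cardinality at most 2n. -/
/-!
Let `B` be a `𝒰`-net of the `st(𝒰,𝒰)`-net `A` with at most `n` points. By maximality every
`a ∈ A` lies in `B` or shares a member of `𝒰` with some point of `B`; pick such a point
`f a ∈ B`. If `f a₁ = f a₂ = b` with `a₁, b ∈ W₁` and `a₂, b ∈ W₂`, then `W₂` meets `W₁`, so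
`a₁` and `a₂` both lie in `st(W₁,𝒰)`, and hence `a₁ = a₂` since `A` is a `st(𝒰,𝒰)`-net.
So `f` is injective and `|A| ≤ |B| ≤ n`.
-/

open Set

variable {X Y : Type*}

/-- The star of a set `V` against a family `U` of subsets of `X`. -/
def stA (V : Set X) (U : Set (Set X)) : Set X :=
  ⋃₀ {A | A ∈ U ∧ (A ∩ V).Nonempty}

/-- The star of a family `V` against a family `U`. -/
def stF (V U : Set (Set X)) : Set (Set X) := (fun A => stA A U) '' V

def NoTwo (U : Set (Set X)) (B : Set X) : Prop :=
  ∀ x ∈ B, ∀ y ∈ B, x ≠ y → ∀ A ∈ U, ¬(x ∈ A ∧ y ∈ A)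

/-- `B` is a `U`-net of `V`: a maximal subset of `V` no two of whose elements
lie in a common element of `U`. -/
def IsNet (U : Set (Set X)) (V B : Set X) : Prop :=
  B ⊆ V ∧ NoTwo U B ∧ ∀ B' : Set X, B ⊆ B' → B' ⊆ V → NoTwo U B' → B' = B

def Near (U : Set (Set X)) (a b : X) : Prop :=
  a = b ∨ ∃ W ∈ U, a ∈ W ∧ b ∈ W

section

variable {U : Set (Set X)}

theorem stA_mem_stF {W : Set X} (hW : W ∈ U) : stA W U ∈ stF U U :=
  mem_image_of_mem _ hW

theorem mem_stA {W W' : Set X} {y z : X} (hW' : W' ∈ U) (hy : y ∈ W') (hzW' : z ∈ W')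
    (hzW : z ∈ W) : y ∈ stA W U :=
  ⟨W', ⟨hW', z, hzW', hzW⟩, hy⟩

theorem IsNet.exists_near {V B : Set X} (hB : IsNet U V B) {a : X} (ha : a ∈ V) :
    ∃ b ∈ B, Near U a b := by
  by_contra! hfar
  have haB : a ∉ B := fun haB => hfar a haB (Or.inl rfl)
  have hsep : NoTwo U (insert a B) := by
    rintro x (rfl | hx) y (rfl | hy) hxy W hW ⟨hxW, hyW⟩
    · exact hxy rfl
    · exact hfar y hy (Or.inr ⟨W, hW, hxW, hyW⟩)
    · exact hfar x hx (Or.inr ⟨W, hW, hyW, hxW⟩)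
    · exact hB.2.1 x hx y hy hxy W hW ⟨hxW, hyW⟩
  exact haB (hB.2.2 _ (subset_insert a B) (insert_subset ha hB.1) hsep ▸ mem_insert a B)

theorem NoTwo.eq_of_near {A : Set X} (hA : NoTwo (stF U U) A) {a₁ a₂ b : X} (h₁ : a₁ ∈ A)
    (h₂ : a₂ ∈ A) (hn₁ : Near U a₁ b) (hn₂ : Near U a₂ b) : a₁ = a₂ := by
  by_contra hne
  have hclose : ∀ {W₁ W₂ : Set X}, W₁ ∈ U → W₂ ∈ U → a₁ ∈ W₁ → b ∈ W₁ → a₂ ∈ W₂ → b ∈ W₂ →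
      False := fun hW₁ hW₂ ha₁ hb₁ ha₂ hb₂ =>
    hA a₁ h₁ a₂ h₂ hne _ (stA_mem_stF hW₁) ⟨mem_stA hW₁ ha₁ hb₁ hb₁, mem_stA hW₂ ha₂ hb₂ hb₁⟩
  rcases hn₁ with rfl | ⟨W₁, hW₁, ha₁, hb₁⟩ <;> rcases hn₂ with rfl | ⟨W₂, hW₂, ha₂, hb₂⟩
  · exact hne rfl
  · exact hclose hW₂ hW₂ hb₂ hb₂ ha₂ hb₂
  · exact hclose hW₁ hW₁ ha₁ hb₁ hb₁ hb₁
  · exact hclose hW₁ hW₂ ha₁ hb₁ ha₂ hb₂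

theorem IsNet.finite_and_ncard_le {V A B : Set X} (hB : IsNet U V B) (hBfin : B.Finite)
    (hAV : A ⊆ V) (hA : NoTwo (stF U U) A) : A.Finite ∧ A.ncard ≤ B.ncard := by
  choose! f hfB hf using fun a (ha : a ∈ A) => hB.exists_near (hAV ha)
  have hinj : InjOn f A := fun a₁ h₁ a₂ h₂ he => hA.eq_of_near h₁ h₂ (hf a₁ h₁) (he ▸ hf a₂ h₂)
  exact ⟨.of_injOn hfB hinj hBfin, ncard_le_ncard_of_injOn f hfB hinj hBfin⟩

end

theorem star_net_bound_general (U : Set (Set X)) (n : ℕ)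
    (h : ∀ V : Set X, ∃ B : Set X, IsNet U V B ∧ B.Finite ∧ B.ncard ≤ n) :
    ∀ V A : Set X, IsNet (stF U U) V A → A.Finite ∧ A.ncard ≤ 2 * n := by
  intro V A hA
  obtain ⟨B, hB, hBfin, hBn⟩ := h A
  obtain ⟨hAfin, hAB⟩ := hB.finite_and_ncard_le hBfin subset_rfl hA.2.1
  exact ⟨hAfin, by omega⟩

/-- If every subset of `X` admits a `U`-net with at most `n` elements, then every
`st(U,U)`-net of any subset has at most `2n` elements. -/
theorem star_net_bound (U : Set (Set X)) (hcov : ⋃₀ U = Set.univ) (n : ℕ)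
    (h : ∀ V : Set X, ∃ B : Set X, IsNet U V B ∧ B.Finite ∧ B.ncard ≤ n) :
    ∀ V A : Set X, IsNet (stF U U) V A → A.Finite ∧ A.ncard ≤ 2 * n :=
  star_net_bound_general U n h
end

section
/- A large scale space (X, ℒ) has bounded scale measure (at some scale) if and only if there exists a uniformly bounded scale 𝒰 ∈ ℒ such that for every scale 𝒱 ∈ ℒ there is a natural number k(𝒱) such that every V ∈ 𝒱 can be covered by at most k(𝒱) elements of 𝒰. -/
open Set

variable {X Y : Type*}

/-- A large scale structure on `X`. -/
structure LSS (X : Type*) where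
  fam : Set (Set (Set X))
  nonempty : fam.Nonempty
  refine : ∀ U V : Set (Set X), V ∈ fam →
    (∀ A ∈ U, (∃ a ∈ A, ∃ b ∈ A, a ≠ b) → ∃ B ∈ V, A ⊆ B) → U ∈ fam
  star : ∀ U ∈ fam, ∀ V ∈ fam, stF U V ∈ fam

/-- Bounded scale measure at scale `U` (net formulation): every `U`-net of every
element of every uniformly bounded scale has uniformly bounded cardinality. -/
def BSMat (L : LSS X) (U : Set (Set X)) : Prop :=
  U ∈ L.fam ∧ ∀ V ∈ L.fam, ∃ n : ℕ, ∀ W ∈ V, ∀ B : Set X,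
    IsNet U W B → B.Finite ∧ B.ncard ≤ n

/-- Bounded scale measure at scale `U` (covering formulation): every element of
every uniformly bounded scale is covered by a bounded number of elements of `U`. -/
def BSMcov (L : LSS X) (U : Set (Set X)) : Prop :=
  U ∈ L.fam ∧ ∀ V ∈ L.fam, ∃ k : ℕ, ∀ W ∈ V,
    ∃ F : Finset (Set X), ↑F ⊆ U ∧ F.card ≤ k ∧ W ⊆ ⋃₀ ↑F

/-!
A maximal `U`-net `B` of a set `W` is a "dense" subset: every point of `W` outside `B` shares an
element of `U` with some point of `B`. Hence the stars of the points of `B` against `U` together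
with all singletons cover `W` by at most `#B` sets, and that family of stars is again a uniformly
bounded scale. Conversely, no element of `U` contains two points of a `U`-net, so choosing for each
point of a net an element of a cover by members of `U` that contains it is injective, and every
net is at most as large as any such cover.
-/

theorem noTwo_iff_pairwise {U : Set (Set X)} {B : Set X} :
    NoTwo U B ↔ B.Pairwise fun x y => ∀ A ∈ U, ¬(x ∈ A ∧ y ∈ A) :=
  Iff.rfl

theorem exists_isNet (U : Set (Set X)) (W : Set X) : ∃ B, IsNet U W B := by
  obtain ⟨B, hB⟩ := zorn_subset {B : Set X | B ⊆ W ∧ NoTwo U B} fun c hc hchain => by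
    refine ⟨⋃₀ c, ⟨sUnion_subset fun s hs => (hc hs).1, ?_⟩, fun s => subset_sUnion_of_mem⟩
    rw [noTwo_iff_pairwise, pairwise_sUnion hchain.directedOn]
    exact fun s hs => (hc hs).2
  exact ⟨B, hB.1.1, hB.1.2, fun B' hBB' hB'W hB' => (hB.eq_of_subset ⟨hB'W, hB'⟩ hBB').symm⟩

theorem IsNet.exists_mem_common {U : Set (Set X)} {W B : Set X} (hB : IsNet U W B) {x : X}
    (hxW : x ∈ W) (hxB : x ∉ B) : ∃ b ∈ B, ∃ A ∈ U, x ∈ A ∧ b ∈ A := by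
  by_contra! hfar
  have hnet : NoTwo U (insert x B) := by
    refine noTwo_iff_pairwise.2 (pairwise_insert.2 ⟨hB.2.1, fun b hb _ => ⟨?_, ?_⟩⟩)
    · exact fun A hA ⟨hxA, hbA⟩ => hfar b hb A hA hxA hbA
    · exact fun A hA ⟨hbA, hxA⟩ => hfar b hb A hA hxA hbA
  have hins := hB.2.2 _ (subset_insert x B) (insert_subset hxW hB.1) hnet
  exact hxB (hins ▸ mem_insert x B)

theorem NoTwo.finite_and_ncard_le {U : Set (Set X)} {B : Set X} {F : Finset (Set X)}
    (hB : NoTwo U B) (hFU : (F : Set (Set X)) ⊆ U) (hBF : B ⊆ ⋃₀ F) :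
    B.Finite ∧ B.ncard ≤ F.card := by
  have hcov : ∀ b ∈ B, ∃ A ∈ F, b ∈ A := fun b hb => mem_sUnion.1 (hBF hb)
  choose! f hfF hf using hcov
  have hmaps : MapsTo f B F := fun b hb => hfF b hb
  have hinj : InjOn f B := fun b hb b' hb' hbb' => by_contra fun hne =>
    hB b hb b' hb' hne (f b) (hFU (hfF b hb)) ⟨hf b hb, hbb' ▸ hf b' hb'⟩
  refine ⟨Finite.of_injOn hmaps hinj F.finite_toSet, ?_⟩
  exact (ncard_le_ncard_of_injOn f hmaps hinj).trans (ncard_coe_finset F).le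

theorem mem_stA_singleton {U : Set (Set X)} {A : Set X} (hA : A ∈ U) {x y : X} (hx : x ∈ A)
    (hy : y ∈ A) : x ∈ stA {y} U :=
  ⟨A, ⟨hA, y, hy, rfl⟩, hx⟩

/-- One-point sets are free in a large scale structure, and they put every point into its own star
(a point of a net need not lie in any element of `U`). -/
def withSingletons (U : Set (Set X)) : Set (Set X) := U ∪ range fun x : X => {x}

theorem LSS.withSingletons_mem (L : LSS X) {U : Set (Set X)} (hU : U ∈ L.fam) :
    withSingletons U ∈ L.fam := by
  refine L.refine _ U hU ?_
  rintro A (hA | ⟨x, rfl⟩) ⟨a, ha, b, hb, hab⟩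
  · exact ⟨A, hA, subset_rfl⟩
  · exact absurd (ha.trans hb.symm) hab

theorem IsNet.subset_biUnion_stA {U : Set (Set X)} {W B : Set X} (hB : IsNet U W B) :
    W ⊆ ⋃ b ∈ B, stA {b} (withSingletons U) := by
  intro x hxW
  rw [mem_iUnion₂]
  by_cases hxB : x ∈ B
  · exact ⟨x, hxB, mem_stA_singleton (Or.inr ⟨x, rfl⟩) (mem_singleton x) (mem_singleton x)⟩
  · obtain ⟨b, hb, A, hA, hxA, hbA⟩ := hB.exists_mem_common hxW hxB
    exact ⟨b, hb, mem_stA_singleton (Or.inl hA) hxA hbA⟩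

theorem BSMat.bsmcov_stF {L : LSS X} {U : Set (Set X)} (h : BSMat L U) :
    BSMcov L (stF (withSingletons U) (withSingletons U)) := by
  classical
  have hU₁ := L.withSingletons_mem h.1
  refine ⟨L.star _ hU₁ _ hU₁, fun V hV => ?_⟩
  obtain ⟨n, hn⟩ := h.2 V hV
  refine ⟨n, fun W hW => ?_⟩
  obtain ⟨B, hB⟩ := exists_isNet U W
  obtain ⟨hBfin, hBn⟩ := hn W hW B hB
  refine ⟨hBfin.toFinset.image fun b => stA {b} (withSingletons U), ?_, ?_, ?_⟩
  · rw [Finset.coe_image, image_subset_iff]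
    exact fun b _ => ⟨{b}, Or.inr ⟨b, rfl⟩, rfl⟩
  · calc _ ≤ hBfin.toFinset.card := Finset.card_image_le
      _ = B.ncard := (ncard_eq_toFinset_card B hBfin).symm
      _ ≤ n := hBn
  · simpa [sUnion_image] using hB.subset_biUnion_stA

theorem BSMcov.bsmat {L : LSS X} {U : Set (Set X)} (h : BSMcov L U) : BSMat L U := by
  refine ⟨h.1, fun V hV => ?_⟩
  obtain ⟨k, hk⟩ := h.2 V hV
  refine ⟨k, fun W hW B hB => ?_⟩
  obtain ⟨F, hFU, hFk, hWF⟩ := hk W hW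
  obtain ⟨hBfin, hBF⟩ := hB.2.1.finite_and_ncard_le hFU (hB.1.trans hWF)
  exact ⟨hBfin, hBF.trans hFk⟩

/-- A large scale space has bounded scale measure at some scale iff there is a
uniformly bounded scale `U` such that every element of every uniformly bounded
scale is covered by a bounded number of elements of `U`. -/
theorem bsm_iff_cov (L : LSS X) :
    (∃ U : Set (Set X), BSMat L U) ↔ (∃ U : Set (Set X), BSMcov L U) :=
  ⟨fun ⟨_, hU⟩ => ⟨_, hU.bsmcov_stF⟩, fun ⟨U, hU⟩ => ⟨U, hU.bsmat⟩⟩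
end

section
/- If f : X → Y is a coarse equivalence of large scale spaces and (Y, ℒ_Y) has bounded scale measure at scale 𝒰, then (X, ℒ_X) has bounded scale measure at scale f⁻¹(𝒰) = {f⁻¹(U) : U ∈ 𝒰}. -/
open Set

variable {X Y : Type*}

/-- The image of a family of subsets under `f`. -/
def imFam (f : X → Y) (U : Set (Set X)) : Set (Set Y) := (Set.image f) '' U

/-- The preimage of a family of subsets under `f`. -/
def preFam (f : X → Y) (V : Set (Set Y)) : Set (Set X) := (Set.preimage f) '' V

/-- `f` is large scale continuous (bornologous). -/
def LSContinuous (LX : LSS X) (LY : LSS Y) (f : X → Y) : Prop :=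
  ∀ U ∈ LX.fam, imFam f U ∈ LY.fam

/-- Two maps into `Y` are close. -/
def Close (LY : LSS Y) (f g : X → Y) : Prop :=
  ∃ V ∈ LY.fam, ∀ x : X, ∃ W ∈ V, f x ∈ W ∧ g x ∈ W

/-- `f` is a coarse equivalence. -/
def CoarseEquiv (LX : LSS X) (LY : LSS Y) (f : X → Y) : Prop :=
  LSContinuous LX LY f ∧ ∃ g : Y → X, LSContinuous LY LX g ∧
    Close LY (f ∘ g) id ∧ Close LX (g ∘ f) id

/-!
Pull back along `f` and push forward along a coarse inverse `g`: since `g ∘ f` is close to the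
identity via a scale `V₀`, each `f⁻¹(B)` lies in the star of `g(B)` against `V₀`, so `f⁻¹(𝒰)` is
refined by a scale. For `W` in a scale `𝒱` of `X`, the set `f(W)` belongs to the scale `f(𝒱)`
of `Y`, so it is covered by at most `k(f(𝒱))` members of `𝒰`, and their preimages cover `W`.
-/

theorem LSS.mem_of_forall_subset (L : LSS X) {U V : Set (Set X)} (hV : V ∈ L.fam)
    (h : ∀ A ∈ U, ∃ B ∈ V, A ⊆ B) : U ∈ L.fam :=
  L.refine U V hV fun A hA _ => h A hA

theorem preimage_subset_stA_image {f : X → Y} {g : Y → X} {V₀ : Set (Set X)}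
    (hV₀ : ∀ x, ∃ W ∈ V₀, g (f x) ∈ W ∧ x ∈ W) (B : Set Y) :
    f ⁻¹' B ⊆ stA (g '' B) V₀ := by
  intro x hx
  obtain ⟨W, hW, hgfx, hxW⟩ := hV₀ x
  exact ⟨W, ⟨hW, g (f x), hgfx, mem_image_of_mem g hx⟩, hxW⟩

theorem preFam_mem_of_close (LX : LSS X) (LY : LSS Y) {f : X → Y} {g : Y → X}
    (hg : LSContinuous LY LX g) (hgf : Close LX (g ∘ f) id) {U : Set (Set Y)}
    (hU : U ∈ LY.fam) : preFam f U ∈ LX.fam := by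
  obtain ⟨V₀, hV₀, hclose⟩ := hgf
  refine LX.mem_of_forall_subset (LX.star _ (hg U hU) _ hV₀) ?_
  rintro _ ⟨B, hB, rfl⟩
  exact ⟨stA (g '' B) V₀, mem_image_of_mem _ (mem_image_of_mem _ hB),
    preimage_subset_stA_image (f := f) hclose B⟩

theorem exists_preFam_cover (f : X → Y) {U : Set (Set Y)} {W : Set X} {F : Finset (Set Y)}
    (hFU : ↑F ⊆ U) (hWF : f '' W ⊆ ⋃₀ ↑F) :
    ∃ F' : Finset (Set X), ↑F' ⊆ preFam f U ∧ F'.card ≤ F.card ∧ W ⊆ ⋃₀ ↑F' := by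
  classical
  refine ⟨F.image (preimage f), ?_, Finset.card_image_le, ?_⟩
  · rw [Finset.coe_image]
    exact image_mono hFU
  · intro x hx
    obtain ⟨B, hB, hfx⟩ := hWF (mem_image_of_mem f hx)
    exact ⟨f ⁻¹' B, Finset.mem_image_of_mem _ hB, hfx⟩

/-- If `f : X → Y` is a coarse equivalence and `Y` has bounded scale measure at
scale `U`, then `X` has bounded scale measure at the scale `f⁻¹(U)`. -/
theorem bsm_coarse_invariant_inv (LX : LSS X) (LY : LSS Y) (f : X → Y)
    (hf : CoarseEquiv LX LY f) (U : Set (Set Y)) (h : BSMcov LY U) :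
    BSMcov LX (preFam f U) := by
  obtain ⟨hfc, g, hg, -, hgf⟩ := hf
  obtain ⟨hU, hcov⟩ := h
  refine ⟨preFam_mem_of_close LX LY hg hgf hU, fun V hV => ?_⟩
  obtain ⟨k, hk⟩ := hcov _ (hfc V hV)
  refine ⟨k, fun W hW => ?_⟩
  obtain ⟨F, hFU, hFk, hWF⟩ := hk _ (mem_image_of_mem _ hW)
  obtain ⟨F', hF'U, hF'F, hWF'⟩ := exists_preFam_cover f hFU hWF
  exact ⟨F', hF'U, hF'F.trans hFk, hWF'⟩
end

section
/- Let G be a group with a proper left-invariant metric d and let ℒ be the large scale structure induced by d. Then (G, ℒ) has bounded scale measure at the scale of open R-balls for any R > 0. -/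
/-!
Left translations are isometries, so a set of diameter at most `C` containing `x₀` lies in
`closedBall x₀ C = x₀ • closedBall 1 C`. The ball around `1` is compact, hence covered by
finitely many `R`-balls, and translating that one cover by `x₀` gives covers of the same size.
-/

open Set Metric
open scoped Pointwise

theorem exists_card_le_forall_closedBall_smul_subset_iUnion_ball {G X : Type*}
    [PseudoMetricSpace X] [ProperSpace X] [Group G] [MulAction G X] [IsIsometricSMul G X]
    (x : X) (C : ℝ) {R : ℝ} (hR : 0 < R) :
    ∃ k : ℕ, ∀ g : G, ∃ F : Finset X, F.card ≤ k ∧ closedBall (g • x) C ⊆ ⋃ y ∈ F, ball y R := by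
  classical
  obtain ⟨t, -, ht, hcover⟩ := (isCompact_closedBall x C).finite_cover_balls hR
  refine ⟨ht.toFinset.card, fun g => ⟨ht.toFinset.image (g • ·), Finset.card_image_le, ?_⟩⟩
  calc closedBall (g • x) C = g • closedBall x C := (smul_closedBall g x C).symm
    _ ⊆ g • ⋃ y ∈ t, ball y R := smul_set_mono hcover
    _ = ⋃ y ∈ ht.toFinset.image (g • ·), ball y R := by
      simp [smul_set_iUnion₂]

/-- A group with a proper left-invariant metric has bounded scale measure at the
scale of open `R`-balls for any `R > 0`: every uniformly bounded family (family of
sets of uniformly bounded diameter) has each of its members covered by a bounded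
number of open `R`-balls. -/
theorem group_proper_metric_bsm (G : Type*) [Group G] [MetricSpace G] [ProperSpace G]
    (hinv : ∀ k g h : G, dist (k * g) (k * h) = dist g h) (R : ℝ) (hR : 0 < R) :
    ∀ V : Set (Set G), (∃ C : ℝ, ∀ A ∈ V, ∀ x ∈ A, ∀ y ∈ A, dist x y ≤ C) →
      ∃ k : ℕ, ∀ W ∈ V, ∃ F : Finset G, F.card ≤ k ∧ W ⊆ ⋃ g ∈ F, Metric.ball g R := by
  rintro V ⟨C, hC⟩
  have : IsIsometricSMul G G := ⟨fun k => Isometry.of_dist_eq (hinv k)⟩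
  obtain ⟨k, hk⟩ := exists_card_le_forall_closedBall_smul_subset_iUnion_ball (G := G) (1 : G) C hR
  refine ⟨k, fun W hW => ?_⟩
  rcases W.eq_empty_or_nonempty with rfl | ⟨x₀, hx₀⟩
  · exact ⟨∅, by simp⟩
  obtain ⟨F, hFk, hF⟩ := hk x₀
  rw [smul_eq_mul, mul_one] at hF
  exact ⟨F, hFk, fun x hx => hF (mem_closedBall.2 (hC W hW x hx x₀ hx₀))⟩
end

section
/- Let (X, ℒ_X) and (Y, ℒ_Y) be large scale spaces with bounded geometry and f : X → Y a coarse equivalence such that sup_{y∈Y} |f⁻¹(y)| = N < ∞. If (Y, ℒ_Y) has property A, then (X, ℒ_X) has property A. -/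
open Set

variable {X Y : Type*}

/-- Bounded geometry: each uniformly bounded family has a uniform finite bound
on the cardinalities of its members. -/
def BoundedGeometry (L : LSS X) : Prop :=
  ∀ U ∈ L.fam, ∃ n : ℕ, ∀ A ∈ U, A.Finite ∧ A.ncard ≤ n

/-- Property A for a large scale space. -/
def PropA (L : LSS X) : Prop :=
  ∀ ε : ℝ, 0 < ε → ∀ U ∈ L.fam, ∃ V ∈ L.fam, ∃ A : X → Set (X × ℕ),
    (∀ x : X, (A x).Finite) ∧
    (∀ x : X, A x ⊆ (stA {x} V) ×ˢ (Set.univ : Set ℕ)) ∧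
    (∀ x : X, (x, 1) ∈ A x) ∧
    ∀ x y : X, y ∈ stA {x} U →
      ((symmDiff (A x) (A y)).ncard : ℝ) < ε * ((A x ∩ A y).ncard : ℝ)

/-! Let `B` witness Property A for `Y` and let `r : Y → Y` be a retraction onto the range of `f`
that is close to the identity (it moves `y` to `f (g y)` off the range). Put
`A x := (f × id)⁻¹' ((r × id) '' B (f x))`. Bounded geometry of `Y` bounds the fibers of `r`
by some `M`, and the fibers of `f` are bounded by `N`; hence passing from `B` to `A` multiplies
symmetric differences by at most `N` and divides intersections by at most `M`, so Property A of
`Y` at `ε / (N M)` gives Property A of `X` at `ε`. -/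

open scoped symmDiff

section FiberBounded

variable {α β γ : Type*}

def FiberBounded (φ : α → β) (N : ℕ) : Prop :=
  ∀ b, (φ ⁻¹' {b}).Finite ∧ (φ ⁻¹' {b}).ncard ≤ N

variable {φ : α → β} {N : ℕ}

lemma FiberBounded.mono {M : ℕ} (hφ : FiberBounded φ N) (hNM : N ≤ M) : FiberBounded φ M :=
  fun b => ⟨(hφ b).1, (hφ b).2.trans hNM⟩

lemma FiberBounded.prodMap_id (hφ : FiberBounded φ N) :
    FiberBounded (Prod.map φ (id : γ → γ)) N := by
  rintro ⟨b, c⟩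
  have hfiber : Prod.map φ id ⁻¹' {(b, c)} = (·, c) '' (φ ⁻¹' {b}) := by
    ext ⟨a, c'⟩
    simp [Prod.ext_iff, eq_comm]
  rw [hfiber, Set.ncard_image_of_injective _ fun _ _ h => (Prod.ext_iff.mp h).1]
  exact ⟨(hφ b).1.image _, (hφ b).2⟩

lemma FiberBounded.finite_preimage (hφ : FiberBounded φ N) {T : Set β} (hT : T.Finite) :
    (φ ⁻¹' T).Finite := by
  rw [← Set.biUnion_preimage_singleton]
  exact hT.biUnion fun b _ => (hφ b).1

lemma FiberBounded.ncard_preimage_le (hφ : FiberBounded φ N) {T : Set β} (hT : T.Finite) :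
    (φ ⁻¹' T).ncard ≤ N * T.ncard := by
  calc (φ ⁻¹' T).ncard = (⋃ b ∈ hT.toFinset, φ ⁻¹' {b}).ncard := by
        simp [Set.biUnion_preimage_singleton]
    _ ≤ ∑ b ∈ hT.toFinset, (φ ⁻¹' {b}).ncard := hT.toFinset.set_ncard_biUnion_le _
    _ ≤ ∑ _b ∈ hT.toFinset, N := Finset.sum_le_sum fun b _ => (hφ b).2
    _ = N * T.ncard := by simp [Set.ncard_eq_toFinset_card T hT, mul_comm]

lemma FiberBounded.ncard_le_mul_ncard_image (hφ : FiberBounded φ N) {S : Set α}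
    (hS : S.Finite) : S.ncard ≤ N * (φ '' S).ncard :=
  (Set.ncard_le_ncard (Set.subset_preimage_image φ S)
    (hφ.finite_preimage (hS.image φ))).trans (hφ.ncard_preimage_le (hS.image φ))

lemma ncard_le_ncard_preimage_of_subset_range {T : Set β} (hT : T ⊆ Set.range φ)
    (hfin : (φ ⁻¹' T).Finite) : T.ncard ≤ (φ ⁻¹' T).ncard := by
  conv_lhs => rw [← Set.image_preimage_eq_of_subset hT]
  exact Set.ncard_image_le hfin

lemma image_symmDiff_subset (ψ : γ → β) (S T : Set γ) : (ψ '' S) ∆ (ψ '' T) ⊆ ψ '' (S ∆ T) := by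
  rintro _ (⟨⟨a, ha, rfl⟩, hb⟩ | ⟨⟨a, ha, rfl⟩, hb⟩)
  · exact ⟨a, Or.inl ⟨ha, fun h => hb ⟨a, h, rfl⟩⟩, rfl⟩
  · exact ⟨a, Or.inr ⟨ha, fun h => hb ⟨a, h, rfl⟩⟩, rfl⟩

variable {ψ : γ → β} {S T : Set γ}

lemma FiberBounded.ncard_symmDiff_preimage_image_le (hφ : FiberBounded φ N)
    (hS : S.Finite) (hT : T.Finite) :
    ((φ ⁻¹' (ψ '' S)) ∆ (φ ⁻¹' (ψ '' T))).ncard ≤ N * (S ∆ T).ncard := by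
  have hfin : (S ∆ T).Finite := (hS.union hT).subset Set.symmDiff_subset_union
  calc ((φ ⁻¹' (ψ '' S)) ∆ (φ ⁻¹' (ψ '' T))).ncard ≤ (φ ⁻¹' (ψ '' (S ∆ T))).ncard := by
        rw [← Set.preimage_symmDiff]
        exact Set.ncard_le_ncard (Set.preimage_mono (image_symmDiff_subset ψ S T))
          (hφ.finite_preimage (hfin.image ψ))
    _ ≤ N * (ψ '' (S ∆ T)).ncard := hφ.ncard_preimage_le (hfin.image ψ)
    _ ≤ N * (S ∆ T).ncard := Nat.mul_le_mul_left N (Set.ncard_image_le hfin)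

lemma FiberBounded.ncard_inter_le_ncard_inter_preimage_image {M : ℕ} (hφ : FiberBounded φ N)
    (hψ : FiberBounded ψ M) (hψφ : Set.range ψ ⊆ Set.range φ) (hS : S.Finite) :
    (S ∩ T).ncard ≤ M * (φ ⁻¹' (ψ '' S) ∩ φ ⁻¹' (ψ '' T)).ncard := by
  have hsub : φ ⁻¹' (ψ '' (S ∩ T)) ⊆ φ ⁻¹' (ψ '' S) ∩ φ ⁻¹' (ψ '' T) :=
    Set.subset_inter (Set.preimage_mono (Set.image_mono Set.inter_subset_left))
      (Set.preimage_mono (Set.image_mono Set.inter_subset_right))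
  have hfin : (φ ⁻¹' (ψ '' S) ∩ φ ⁻¹' (ψ '' T)).Finite :=
    (hφ.finite_preimage (hS.image ψ)).subset Set.inter_subset_left
  calc (S ∩ T).ncard ≤ M * (ψ '' (S ∩ T)).ncard :=
        hψ.ncard_le_mul_ncard_image (hS.subset Set.inter_subset_left)
    _ ≤ M * (φ ⁻¹' (ψ '' (S ∩ T))).ncard := Nat.mul_le_mul_left M <|
        ncard_le_ncard_preimage_of_subset_range ((Set.image_subset_range _ _).trans hψφ)
          (hfin.subset hsub)
    _ ≤ M * (φ ⁻¹' (ψ '' S) ∩ φ ⁻¹' (ψ '' T)).ncard :=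
        Nat.mul_le_mul_left M (Set.ncard_le_ncard hsub hfin)

theorem FiberBounded.ncard_symmDiff_preimage_image_lt {M : ℕ} (hφ : FiberBounded φ N)
    (hN : 0 < N) (hψ : FiberBounded ψ M) (hψφ : Set.range ψ ⊆ Set.range φ)
    (hS : S.Finite) (hT : T.Finite) {δ : ℝ} (hST : ((S ∆ T).ncard : ℝ) < δ * (S ∩ T).ncard) :
    (((φ ⁻¹' (ψ '' S)) ∆ (φ ⁻¹' (ψ '' T))).ncard : ℝ) <
      N * M * δ * (φ ⁻¹' (ψ '' S) ∩ φ ⁻¹' (ψ '' T)).ncard := by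
  have hδ : 0 < δ := pos_of_mul_pos_left ((Nat.cast_nonneg _).trans_lt hST) (Nat.cast_nonneg _)
  have hsymm : (((φ ⁻¹' (ψ '' S)) ∆ (φ ⁻¹' (ψ '' T))).ncard : ℝ) ≤ N * (S ∆ T).ncard := by
    exact_mod_cast hφ.ncard_symmDiff_preimage_image_le hS hT
  have hinter : ((S ∩ T).ncard : ℝ) ≤ M * (φ ⁻¹' (ψ '' S) ∩ φ ⁻¹' (ψ '' T)).ncard := by
    exact_mod_cast hφ.ncard_inter_le_ncard_inter_preimage_image hψ hψφ hS
  have hN' : (0 : ℝ) < N := by exact_mod_cast hN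
  calc _ ≤ (N : ℝ) * (S ∆ T).ncard := hsymm
    _ < N * (δ * (S ∩ T).ncard) := mul_lt_mul_of_pos_left hST hN'
    _ ≤ N * (δ * (M * (φ ⁻¹' (ψ '' S) ∩ φ ⁻¹' (ψ '' T)).ncard)) := by gcongr
    _ = _ := by ring

end FiberBounded

section LargeScale

variable {α β : Type*}

lemma mem_stA_singleton_s15 {V : Set (Set α)} {a b : α} :
    b ∈ stA {a} V ↔ ∃ W ∈ V, a ∈ W ∧ b ∈ W := by
  simp only [stA, Set.mem_sUnion, Set.inter_singleton_nonempty]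
  exact ⟨fun ⟨W, ⟨hW, ha⟩, hb⟩ => ⟨W, hW, ha, hb⟩, fun ⟨W, hW, ha, hb⟩ => ⟨W, ⟨hW, ha⟩, hb⟩⟩

lemma image_mem_stA_imFam (f : α → β) {U : Set (Set α)} {a b : α} (h : b ∈ stA {a} U) :
    f b ∈ stA {f a} (imFam f U) := by
  obtain ⟨W, hW, ha, hb⟩ := mem_stA_singleton_s15.mp h
  exact mem_stA_singleton_s15.mpr ⟨f '' W, ⟨W, hW, rfl⟩, ⟨a, ha, rfl⟩, ⟨b, hb, rfl⟩⟩

lemma LSS.range_singleton_mem (L : LSS α) : Set.range (singleton : α → Set α) ∈ L.fam := by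
  obtain ⟨V, hV⟩ := L.nonempty
  refine L.refine _ V hV ?_
  rintro _ ⟨w, rfl⟩ ⟨a, ha, b, hb, hab⟩
  exact absurd (ha.trans hb.symm) hab

lemma CoarseEquiv.preFam_mem {LX : LSS α} {LY : LSS β} {f : α → β} (hf : CoarseEquiv LX LY f)
    {W : Set (Set β)} (hW : W ∈ LY.fam) : preFam f W ∈ LX.fam := by
  obtain ⟨-, g, hg, -, C, hC, hgf⟩ := hf
  refine LX.refine _ (stF (imFam g W) C) (LX.star _ (hg W hW) _ hC) ?_
  rintro _ ⟨W', hW', rfl⟩ -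
  refine ⟨stA (g '' W') C, ⟨g '' W', ⟨W', hW', rfl⟩, rfl⟩, fun z hz => ?_⟩
  obtain ⟨E, hE, hgfE, hzE⟩ := hgf z
  exact ⟨E, ⟨hE, g (f z), hgfE, f z, hz, rfl⟩, hzE⟩

lemma exists_retraction_onto_range {L : LSS β} {f : α → β} {g : β → α}
    (hfg : Close L (f ∘ g) id) :
    ∃ V ∈ L.fam, ∃ r : β → β, (∀ y, r y ∈ Set.range f) ∧ (∀ x, r (f x) = f x) ∧
      ∀ y, ∃ W ∈ V, r y ∈ W ∧ y ∈ W := by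
  classical
  obtain ⟨V, hV, hclose⟩ := hfg
  refine ⟨V, hV, fun y => if y ∈ Set.range f then y else f (g y), fun y => ?_,
    fun x => if_pos ⟨x, rfl⟩, fun y => ?_⟩
  · dsimp only
    split_ifs with h
    exacts [h, ⟨g y, rfl⟩]
  · obtain ⟨W, hW, hfgW, hyW⟩ := hclose y
    dsimp only
    split_ifs
    exacts [⟨W, hW, hyW, hyW⟩, ⟨W, hW, hfgW, hyW⟩]

lemma BoundedGeometry.exists_fiberBounded {L : LSS α} (hL : BoundedGeometry L)
    {V : Set (Set α)} (hV : V ∈ L.fam) {r : α → α} (hr : ∀ y, ∃ W ∈ V, r y ∈ W ∧ y ∈ W) :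
    ∃ M, FiberBounded r M := by
  obtain ⟨M, hM⟩ := hL _ (L.star _ L.range_singleton_mem _ hV)
  refine ⟨M, fun w => ?_⟩
  have hsub : r ⁻¹' {w} ⊆ stA {w} V := fun z hrzw => by
    obtain ⟨W, hW, hrz, hz⟩ := hr z
    exact mem_stA_singleton_s15.mpr ⟨W, hW, Set.mem_singleton_iff.mp hrzw ▸ hrz, hz⟩
  obtain ⟨hfin, hcard⟩ := hM _ ⟨{w}, ⟨w, rfl⟩, rfl⟩
  exact ⟨hfin.subset hsub, (Set.ncard_le_ncard hsub hfin).trans hcard⟩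

lemma preimage_prodMap_image_subset_stA {f : α → β} {r : β → β} {V V₀ : Set (Set β)}
    (hr : ∀ y, ∃ W ∈ V₀, r y ∈ W ∧ y ∈ W) {x : α} {S : Set (β × ℕ)}
    (hS : S ⊆ stA {f x} V ×ˢ Set.univ) :
    Prod.map f id ⁻¹' (Prod.map r id '' S) ⊆ stA {x} (preFam f (stF V V₀)) ×ˢ Set.univ := by
  rintro ⟨z, n⟩ ⟨⟨y, m⟩, hyS, hyz⟩
  have hryz : r y = f z := congrArg Prod.fst hyz
  obtain ⟨W₁, hW₁, hxW₁, hyW₁⟩ := mem_stA_singleton_s15.mp (hS hyS).1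
  obtain ⟨W₂, hW₂, hryW₂, hyW₂⟩ := hr y
  obtain ⟨W₃, hW₃, -, hxW₃⟩ := hr (f x)
  refine ⟨mem_stA_singleton_s15.mpr ⟨f ⁻¹' stA W₁ V₀, ⟨stA W₁ V₀, ⟨W₁, hW₁, rfl⟩, rfl⟩, ?_, ?_⟩, trivial⟩
  · exact ⟨W₃, ⟨hW₃, f x, hxW₃, hxW₁⟩, hxW₃⟩
  · exact ⟨W₂, ⟨hW₂, y, hyW₂, hyW₁⟩, hryz ▸ hryW₂⟩

end LargeScale

theorem propA_coarse_invariant_general (LX : LSS X) (LY : LSS Y)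
    (hbgY : BoundedGeometry LY)
    (f : X → Y) (hf : CoarseEquiv LX LY f) (N : ℕ)
    (hN : ∀ y : Y, (f ⁻¹' {y}).Finite ∧ (f ⁻¹' {y}).ncard ≤ N)
    (hA : PropA LY) : PropA LX := by
  intro ε hε U hU
  obtain ⟨g, -, hfg, -⟩ := hf.2
  obtain ⟨V₀, hV₀, r, hr_range, hr_fix, hr_close⟩ := exists_retraction_onto_range hfg
  obtain ⟨M, hM⟩ := hbgY.exists_fiberBounded hV₀ hr_close
  -- The bounds are raised to `N + 1` and `M + 1` so that the rescaled `ε` below is positive.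
  have hφ : FiberBounded (Prod.map f (id : ℕ → ℕ)) (N + 1) :=
    (FiberBounded.mono hN N.le_succ).prodMap_id
  have hψ : FiberBounded (Prod.map r (id : ℕ → ℕ)) (M + 1) := (hM.mono M.le_succ).prodMap_id
  have hψφ : Set.range (Prod.map r (id : ℕ → ℕ)) ⊆ Set.range (Prod.map f id) := by
    rw [Set.range_prodMap, Set.range_prodMap]
    exact Set.prod_mono (Set.range_subset_iff.mpr hr_range) subset_rfl
  obtain ⟨V, hV, B, hB_fin, hB_supp, hB_one, hB_est⟩ :=
    hA (ε / ((N + 1) * (M + 1))) (by positivity) _ (hf.1 U hU)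
  refine ⟨preFam f (stF V V₀), hf.preFam_mem (LY.star _ hV _ hV₀),
    fun x => Prod.map f id ⁻¹' (Prod.map r id '' B (f x)),
    fun x => hφ.finite_preimage ((hB_fin _).image _),
    fun x => preimage_prodMap_image_subset_stA hr_close (hB_supp (f x)),
    fun x => ⟨(f x, 1), hB_one (f x), by simp [hr_fix]⟩, fun x y hxy => ?_⟩
  have hε_eq : ((N + 1 : ℕ) : ℝ) * (M + 1 : ℕ) * (ε / ((N + 1) * (M + 1))) = ε := by
    push_cast
    field_simp
  simpa only [hε_eq] using hφ.ncard_symmDiff_preimage_image_lt N.succ_pos hψ hψφ (hB_fin _)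
    (hB_fin _) (hB_est _ _ (image_mem_stA_imFam f hxy))

/-- Property A is inherited along a coarse equivalence with uniformly finite
fibers between spaces with bounded geometry. -/
theorem propA_coarse_invariant (LX : LSS X) (LY : LSS Y)
    (hbgX : BoundedGeometry LX) (hbgY : BoundedGeometry LY)
    (f : X → Y) (hf : CoarseEquiv LX LY f) (N : ℕ)
    (hN : ∀ y : Y, (f ⁻¹' {y}).Finite ∧ (f ⁻¹' {y}).ncard ≤ N)
    (hA : PropA LY) : PropA LX :=
  propA_coarse_invariant_general LX LY hbgY f hf N hN hA
end

section
/- Every large scale space (X, ℒ) of finite asymptotic dimension has property A. -/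
open Set

variable {X Y : Type*}

/-- `asdim(X, L) ≤ k`: every uniformly bounded cover admits a uniformly bounded
coarsening of multiplicity at most `k + 1`. -/
def AsdimLE (L : LSS X) (k : ℕ) : Prop :=
  ∀ U ∈ L.fam, ⋃₀ U = Set.univ → ∃ V ∈ L.fam, ⋃₀ V = Set.univ ∧
    (∀ A ∈ U, ∃ B ∈ V, A ⊆ B) ∧
    ∀ x : X, {B ∈ V | x ∈ B}.Finite ∧ {B ∈ V | x ∈ B}.ncard ≤ k + 1

/-!
Enlarge `U` by all singletons to a cover `U'` and let `st^j x` be the `j`-fold `U'`-star of `x`.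
Coarsen the cover by the `m`-fold stars to a cover `V` of multiplicity at most `k + 1`. For
`B ∈ V`, the depth of `x` in `B` (the number of `j ∈ [1, m]` with `st^j x ⊆ B`) changes by at most
one between `U`-neighbours `x, y`, and vanishes unless `x, y ∈ B`. Stacking these depths over a
chosen point of each `B`, together with one unit over `x`, gives a finitely supported function
`X → ℕ` whose hypograph `A x` has at least `m` points, while `A x` and `A y` differ in at most
`k + 3` points. Choosing `m` large compared with `(k + 3) / ε` gives property A.
-/

open scoped symmDiff

namespace Finsupp

variable {ι : Type*} [DecidableEq ι]

def hypograph (g : ι →₀ ℕ) : Finset (ι × ℕ) :=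
  g.support.biUnion fun z => {z} ×ˢ Finset.Icc 1 (g z)

@[simp]
lemma mem_hypograph {g : ι →₀ ℕ} {p : ι × ℕ} : p ∈ g.hypograph ↔ 1 ≤ p.2 ∧ p.2 ≤ g p.1 := by
  simp only [hypograph, Finset.mem_biUnion, mem_support_iff, Finset.mem_product,
    Finset.mem_singleton, Finset.mem_Icc]
  constructor
  · rintro ⟨z, -, rfl, h⟩
    exact h
  · rintro ⟨h₁, h₂⟩
    exact ⟨p.1, by omega, rfl, h₁, h₂⟩

lemma card_hypograph (g : ι →₀ ℕ) : (g.hypograph).card = g.degree := by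
  rw [hypograph, Finset.card_biUnion, degree_apply]
  · simp
  · intro z _ w _ hzw
    simp only [Finset.disjoint_left, Finset.mem_product, Finset.mem_singleton]
    rintro p ⟨rfl, -⟩ ⟨rfl, -⟩
    exact hzw rfl

lemma hypograph_inter (g h : ι →₀ ℕ) : g.hypograph ∩ h.hypograph = (g ⊓ h).hypograph := by
  ext p
  simp only [Finset.mem_inter, mem_hypograph, inf_apply, le_inf_iff]
  tauto

lemma card_hypograph_sdiff (g h : ι →₀ ℕ) :
    (g.hypograph \ h.hypograph).card = (g - h).degree := by
  have hsplit : g - h + g ⊓ h = g := by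
    ext z
    simp only [coe_add, coe_tsub, inf_apply, Pi.add_apply, Pi.sub_apply]
    omega
  have := Finset.card_sdiff_add_card_inter g.hypograph h.hypograph
  rw [hypograph_inter, card_hypograph, card_hypograph] at this
  have := congrArg degree hsplit
  rw [map_add] at this
  omega

lemma card_hypograph_symmDiff_le {g h d : ι →₀ ℕ} (hg : g ≤ h + d) (hh : h ≤ g + d) :
    (g.hypograph ∆ h.hypograph).card ≤ d.degree := by
  rw [symmDiff_def, Finset.sup_eq_union, Finset.card_union_of_disjoint disjoint_sdiff_sdiff,
    card_hypograph_sdiff, card_hypograph_sdiff, ← map_add]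
  refine degree_mono fun z => ?_
  have := hg z
  have := hh z
  simp only [coe_add, coe_tsub, Pi.add_apply, Pi.sub_apply] at *
  omega

end Finsupp

namespace LSS

variable (L : LSS X)

lemma mem_of_forall_subsingleton {S : Set (Set X)} (hS : ∀ A ∈ S, A.Subsingleton) :
    S ∈ L.fam := by
  obtain ⟨V, hV⟩ := L.nonempty
  refine L.refine S V hV fun A hA ⟨a, ha, b, hb, hab⟩ => ?_
  exact absurd (hS A hA ha hb) hab

lemma union_mem_of_subsingleton {U S : Set (Set X)} (hU : U ∈ L.fam)
    (hS : ∀ A ∈ S, A.Subsingleton) : U ∪ S ∈ L.fam := by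
  refine L.refine _ U hU fun A hA ⟨a, ha, b, hb, hab⟩ => ?_
  rcases hA with hA | hA
  · exact ⟨A, hA, subset_rfl⟩
  · exact absurd (hS A hA ha hb) hab

end LSS

section Star

variable {U : Set (Set X)}

lemma mem_stA_s16 {S : Set X} {z : X} : z ∈ stA S U ↔ ∃ A ∈ U, (A ∩ S).Nonempty ∧ z ∈ A := by
  simp only [stA, mem_sUnion, mem_ofPred_eq, and_assoc]

lemma stA_mono_left {S T : Set X} (h : S ⊆ T) : stA S U ⊆ stA T U := by
  intro z
  simp only [mem_stA_s16]
  rintro ⟨A, hA, hAS, hz⟩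
  exact ⟨A, hA, hAS.mono (inter_subset_inter_right A h), hz⟩

lemma stA_mono_right {U' : Set (Set X)} (h : U ⊆ U') (S : Set X) : stA S U ⊆ stA S U' := by
  intro z
  simp only [mem_stA_s16]
  rintro ⟨A, hA, hAS, hz⟩
  exact ⟨A, h hA, hAS, hz⟩

lemma subset_stA_self (hU : ⋃₀ U = univ) (S : Set X) : S ⊆ stA S U := by
  intro z hz
  obtain ⟨A, hA, hzA⟩ := eq_univ_iff_forall.1 hU z
  exact mem_stA_s16.2 ⟨A, hA, ⟨z, hzA, hz⟩, hzA⟩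

lemma mem_stA_singleton_comm {x y : X} : y ∈ stA {x} U ↔ x ∈ stA {y} U := by
  simp only [mem_stA_s16, inter_singleton_nonempty]
  exact exists_congr fun A => by tauto

def iterStar (U : Set (Set X)) (j : ℕ) (x : X) : Set X := (fun S => stA S U)^[j] {x}

lemma iterStar_succ (j : ℕ) (x : X) : iterStar U (j + 1) x = stA (iterStar U j x) U :=
  Function.iterate_succ_apply' _ _ _

lemma iterStar_mono (hU : ⋃₀ U = univ) (x : X) : Monotone (iterStar U · x) :=
  monotone_nat_of_le_succ fun j => by
    rw [iterStar_succ]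
    exact subset_stA_self hU _

lemma mem_iterStar (hU : ⋃₀ U = univ) (j : ℕ) (x : X) : x ∈ iterStar U j x :=
  iterStar_mono hU x (Nat.zero_le j) rfl

lemma iterStar_subset_iterStar_succ {x y : X} (hy : y ∈ stA {x} U) (j : ℕ) :
    iterStar U j y ⊆ iterStar U (j + 1) x := by
  induction j with
  | zero => simpa [iterStar] using hy
  | succ j ih =>
    rw [iterStar_succ, iterStar_succ _ x]
    exact stA_mono_left ih

lemma range_iterStar_mem (L : LSS X) (hU : U ∈ L.fam) (j : ℕ) :
    range (iterStar U j) ∈ L.fam := by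
  induction j with
  | zero => exact L.mem_of_forall_subsingleton (by simp [iterStar])
  | succ j ih =>
    have : range (iterStar U (j + 1)) = stF (range (iterStar U j)) U := by
      rw [stF, ← range_comp]
      exact congrArg range (funext (iterStar_succ j))
    rw [this]
    exact L.star _ ih _ hU

end Star

section Depth

open Finset

variable {U : Set (Set X)} {m : ℕ}

open Classical in
noncomputable def depth (U : Set (Set X)) (m : ℕ) (x : X) (B : Set X) : ℕ :=
  #{j ∈ Finset.Icc 1 m | iterStar U j x ⊆ B}

lemma depth_le_depth_add_one {x y : X} (hy : y ∈ stA {x} U) (B : Set X) :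
    depth U m x B ≤ depth U m y B + 1 := by
  classical
  let Sy : Finset ℕ := {j ∈ Finset.Icc 1 m | iterStar U j y ⊆ B}
  have hsub : {j ∈ Finset.Icc 1 m | iterStar U j x ⊆ B} ⊆ insert 1 (Sy.image (· + 1)) := by
    intro j hj
    rw [mem_filter, Finset.mem_Icc] at hj
    obtain rfl | ⟨i, rfl, hi⟩ : j = 1 ∨ ∃ i, j = i + 1 ∧ 1 ≤ i := by
      rcases j with _ | _ | i <;> simp_all
    · exact mem_insert_self _ _
    · refine mem_insert_of_mem (mem_image_of_mem _ ?_)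
      exact mem_filter.2 ⟨Finset.mem_Icc.2 ⟨hi, by omega⟩,
        (iterStar_subset_iterStar_succ hy i).trans hj.2⟩
  calc depth U m x B ≤ #(insert 1 (Sy.image (· + 1))) := card_le_card hsub
    _ ≤ #(Sy.image (· + 1)) + 1 := card_insert_le _ _
    _ = depth U m y B + 1 := by rw [Finset.card_image_of_injective _ (add_left_injective 1)]; rfl

lemma depth_eq_zero (hU : ⋃₀ U = univ) {x y : X} {B : Set X} (hy : y ∈ stA {x} U)
    (hyB : y ∉ B) : depth U m x B = 0 := by
  classical
  refine card_eq_zero.2 (filter_eq_empty_iff.2 fun j hj hsub => hyB (hsub ?_))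
  exact iterStar_mono hU x (Finset.mem_Icc.1 hj).1 hy

lemma depth_eq_of_subset (hU : ⋃₀ U = univ) {x : X} {B : Set X}
    (h : iterStar U m x ⊆ B) : depth U m x B = m := by
  classical
  rw [depth, filter_true_of_mem fun j hj => (iterStar_mono hU x (Finset.mem_Icc.1 hj).2).trans h,
    Nat.card_Icc, Nat.add_sub_cancel]

end Depth

section Profile

variable {U V : Set (Set X)} {m : ℕ} (hV : ∀ x, {B ∈ V | x ∈ B}.Finite)

noncomputable def weight (U : Set (Set X)) (m : ℕ) (x : X) : Set X →₀ ℕ :=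
  Finsupp.indicator (hV x).toFinset fun B _ => depth U m x B

noncomputable def memberCount (x : X) : Set X →₀ ℕ :=
  Finsupp.indicator (hV x).toFinset fun _ _ => 1

noncomputable def profile (U : Set (Set X)) (m : ℕ) (c : Set X → X) (x : X) : X →₀ ℕ :=
  Finsupp.single x 1 + (weight hV U m x).mapDomain c

lemma weight_apply (hU : ⋃₀ U = univ) (x : X) (B : Set X) :
    weight hV U m x B = V.indicator (depth U m x) B := by
  classical
  rw [weight, Finsupp.indicator_apply, Set.indicator_apply]
  by_cases hxB : x ∈ B
  · simp [hxB]
  · simp [hxB, depth_eq_zero hU (subset_stA_self hU {x} rfl) hxB]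

lemma memberCount_apply (x : X) (B : Set X) :
    memberCount hV x B = {B ∈ V | x ∈ B}.indicator 1 B := by
  classical
  simp [memberCount, Finsupp.indicator_apply, Set.indicator_apply]

lemma degree_memberCount (x : X) : (memberCount hV x).degree = {B ∈ V | x ∈ B}.ncard := by
  classical
  rw [memberCount, Finsupp.indicator_eq_sum_single, map_sum]
  simp [Set.ncard_eq_toFinset_card _ (hV x)]

lemma weight_le_weight_add_memberCount (hU : ⋃₀ U = univ) {x y : X}
    (hy : y ∈ stA {x} U) :
    weight hV U m x ≤ weight hV U m y + memberCount hV x ∧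
      weight hV U m y ≤ weight hV U m x + memberCount hV x := by
  have hx : x ∈ stA {y} U := mem_stA_singleton_comm.1 hy
  refine ⟨fun B => ?_, fun B => ?_⟩ <;>
    simp only [Finsupp.coe_add, Pi.add_apply, weight_apply hV hU, memberCount_apply] <;>
    by_cases hB : B ∈ V <;> by_cases hxB : x ∈ B <;> simp [hB, hxB]
  · exact depth_le_depth_add_one hy B
  · simp [depth_eq_zero hU (subset_stA_self hU {x} rfl) hxB]
  · exact depth_le_depth_add_one hx B
  · simp [depth_eq_zero hU hx hxB]

lemma profile_le_profile_add (hU : ⋃₀ U = univ) {x y : X} (hy : y ∈ stA {x} U) (c : Set X → X) :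
    let d := Finsupp.single x 1 + Finsupp.single y 1 + (memberCount hV x).mapDomain c
    profile hV U m c x ≤ profile hV U m c y + d ∧ profile hV U m c y ≤ profile hV U m c x + d := by
  obtain ⟨hxy, hyx⟩ := weight_le_weight_add_memberCount hV hU hy
  constructor
  · calc profile hV U m c x
        ≤ Finsupp.single x 1 + (weight hV U m y + memberCount hV x).mapDomain c := by
          unfold profile; gcongr
      _ ≤ _ := by
          rw [profile, Finsupp.mapDomain_add]
          exact le_iff_exists_add.2 ⟨Finsupp.single y 1 + Finsupp.single y 1, by abel⟩
  · calc profile hV U m c y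
        ≤ Finsupp.single y 1 + (weight hV U m x + memberCount hV x).mapDomain c := by
          unfold profile; gcongr
      _ ≤ _ := by
          rw [profile, Finsupp.mapDomain_add]
          exact le_iff_exists_add.2 ⟨Finsupp.single x 1 + Finsupp.single x 1, by abel⟩

variable [DecidableEq X]

lemma card_hypograph_profile_symmDiff_le (hU : ⋃₀ U = univ) {x y : X} (hy : y ∈ stA {x} U)
    (c : Set X → X) :
    ((profile hV U m c x).hypograph ∆ (profile hV U m c y).hypograph).card ≤
      {B ∈ V | x ∈ B}.ncard + 2 := by
  obtain ⟨hxy, hyx⟩ := profile_le_profile_add hV hU hy c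
  refine (Finsupp.card_hypograph_symmDiff_le hxy hyx).trans_eq ?_
  simp only [map_add, Finsupp.degree_single, Finsupp.degree_mapDomain, degree_memberCount]
  ring

lemma le_card_hypograph_profile (hU : ⋃₀ U = univ) {x : X} {B : Set X} (hB : B ∈ V)
    (hxB : iterStar U m x ⊆ B) (c : Set X → X) : m ≤ (profile hV U m c x).hypograph.card := by
  rw [Finsupp.card_hypograph, profile, map_add, Finsupp.degree_mapDomain]
  calc m = weight hV U m x B := by
        rw [weight_apply hV hU, Set.indicator_of_mem hB, depth_eq_of_subset hU hxB]
    _ ≤ (weight hV U m x).degree := Finsupp.le_degree B _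
    _ ≤ _ := le_add_self

lemma mk_one_mem_hypograph_profile (c : Set X → X) (x : X) :
    (x, 1) ∈ (profile hV U m c x).hypograph := by
  simp [profile]

lemma hypograph_profile_subset (hVcov : ⋃₀ V = univ) {c : Set X → X}
    (hc : ∀ B : Set X, B.Nonempty → c B ∈ B) (x : X) :
    ↑(profile hV U m c x).hypograph ⊆ stA {x} V ×ˢ (univ : Set ℕ) := by
  intro p hp
  rw [Finset.mem_coe, Finsupp.mem_hypograph] at hp
  refine ⟨?_, mem_univ _⟩
  have hsupp : p.1 ∈ (profile hV U m c x).support := Finsupp.mem_support_iff.2 (by omega)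
  rcases Finset.mem_union.1 (Finsupp.support_add hsupp) with h | h
  · rw [Finsupp.support_single _ one_ne_zero, Finset.mem_singleton] at h
    rw [h]
    exact subset_stA_self hVcov {x} rfl
  · obtain ⟨B, hB, hcB⟩ := Finset.mem_image.1 (Finsupp.mapDomain_support h)
    obtain ⟨hBV, hxB⟩ := (hV x).mem_toFinset.1 (Finsupp.support_indicator_subset _ _ hB)
    rw [← hcB]
    exact mem_stA_s16.2 ⟨B, hBV, ⟨x, hxB, rfl⟩, hc B ⟨x, hxB⟩⟩

end Profile

lemma propA_of_bounded_symmDiff [DecidableEq X] (L : LSS X) (C : ℕ)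
    (h : ∀ n : ℕ, ∀ U ∈ L.fam, ∃ V ∈ L.fam, ∃ A : X → Finset (X × ℕ),
      (∀ x, ↑(A x) ⊆ stA {x} V ×ˢ (univ : Set ℕ)) ∧ (∀ x, (x, 1) ∈ A x) ∧
      (∀ x, n ≤ (A x).card) ∧ ∀ x y, y ∈ stA {x} U → (A x ∆ A y).card ≤ C) :
    PropA L := by
  intro ε hε U hU
  obtain ⟨V, hV, A, hsupp, hone, hlarge, hclose⟩ := h (C + ⌈C / ε⌉₊ + 1) U hU
  refine ⟨V, hV, fun x => A x, fun x => (A x).finite_toSet, hsupp, hone, fun x y hy => ?_⟩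
  rw [← Finset.coe_symmDiff, ← Finset.coe_inter, ncard_coe_finset, ncard_coe_finset]
  have hΔ := hclose x y hy
  have hsdiff : (A x \ A y).card ≤ (A x ∆ A y).card :=
    Finset.card_le_card (symmDiff_def (A x) (A y) ▸ le_sup_left)
  have hinter : ⌈C / ε⌉₊ < (A x ∩ A y).card := by
    have := Finset.card_sdiff_add_card_inter (A x) (A y)
    have := hlarge x
    omega
  have : (C : ℝ) / ε < (A x ∩ A y).card := (Nat.le_ceil _).trans_lt (mod_cast hinter)
  calc ((A x ∆ A y).card : ℝ) ≤ C := mod_cast hΔ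
    _ < ε * (A x ∩ A y).card := (div_lt_iff₀' hε).1 this

/-- A large scale space of finite asymptotic dimension has property A. -/
theorem asdim_finite_propA (L : LSS X) (h : ∃ k : ℕ, AsdimLE L k) : PropA L := by
  classical
  obtain ⟨k, hk⟩ := h
  refine propA_of_bounded_symmDiff L (k + 3) fun m U hU => ?_
  rcases isEmpty_or_nonempty X with _ | _
  · exact ⟨U, hU, isEmptyElim, isEmptyElim, isEmptyElim, isEmptyElim, isEmptyElim⟩
  set U' := U ∪ range ({·} : X → Set X)
  have hU' : U' ∈ L.fam := L.union_mem_of_subsingleton hU (by simp)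
  have hU'cov : ⋃₀ U' = univ := eq_univ_of_forall fun z => ⟨{z}, Or.inr ⟨z, rfl⟩, rfl⟩
  obtain ⟨V, hV, hVcov, hcoarse, hmult⟩ := hk _ (range_iterStar_mem L hU' m)
    (eq_univ_of_forall fun x => ⟨_, ⟨x, rfl⟩, mem_iterStar hU'cov m x⟩)
  have hfin : ∀ x, {B ∈ V | x ∈ B}.Finite := fun x => (hmult x).1
  let c : Set X → X := fun B => Classical.epsilon (· ∈ B)
  have hc : ∀ B : Set X, B.Nonempty → c B ∈ B := fun B hB => Classical.epsilon_spec hB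
  refine ⟨V, hV, fun x => (profile hfin U' m c x).hypograph, hypograph_profile_subset hfin hVcov hc,
    mk_one_mem_hypograph_profile hfin c, fun x => ?_, fun x y hy => ?_⟩
  · obtain ⟨B, hB, hxB⟩ := hcoarse _ ⟨x, rfl⟩
    exact le_card_hypograph_profile hfin hU'cov hB hxB c
  · refine (card_hypograph_profile_symmDiff_le hfin hU'cov
      (stA_mono_right subset_union_left _ hy) c).trans ?_
    linarith [(hmult x).2]
end

section
/- Let (X, ℒ) be a large scale space with bounded geometry and let 𝒞 be the coarse structure induced by ℒ (E ⊆ X×X is controlled iff E ⊆ ⋃_{B∈ℬ} B×B for some ℬ ∈ ℒ). Then (X, 𝒞) has property A in the sense of Sako if and only if (X, ℒ) has property A in the large scale sense. -/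
open Set

variable {X Y : Type*}

/-- The controlled sets of the coarse structure induced by a large scale structure. -/
def Controlled (L : LSS X) (E : Set (X × X)) : Prop :=
  ∃ B ∈ L.fam, E ⊆ ⋃ b ∈ B, b ×ˢ b

/-- Sako's property A for the induced coarse structure. -/
def SakoPropA (L : LSS X) : Prop :=
  ∀ ε : ℝ, 0 < ε → ∀ T : Set (X × X), Controlled L T →
    ∃ S : Set (X × X), Controlled L S ∧ ∃ A : Set (X × X × ℕ),
      (∀ p ∈ A, (p.1, p.2.1) ∈ S) ∧
      (∀ x : X, {q : X × ℕ | (x, q.1, q.2) ∈ A}.Finite) ∧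
      (∀ x : X, (x, x, 1) ∈ A) ∧
      ∀ x y : X, (x, y) ∈ T →
        ((symmDiff {q : X × ℕ | (x, q.1, q.2) ∈ A}
            {q : X × ℕ | (y, q.1, q.2) ∈ A}).ncard : ℝ) <
          ε * (({q : X × ℕ | (x, q.1, q.2) ∈ A} ∩
            {q : X × ℕ | (y, q.1, q.2) ∈ A}).ncard : ℝ)

/-! The two notions are literal translations of each other: `y ∈ st(x, 𝒰)` says exactly that
`(x, y)` lies in the controlled set `⋃_{B ∈ 𝒰} B × B`, and a family of finite sets
`A_x ⊆ X × ℕ` is the same thing as its graph `{(x, y, n) | (y, n) ∈ A_x} ⊆ X × X × ℕ`. -/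

theorem mem_stA_singleton_iff {U : Set (Set X)} {x y : X} :
    y ∈ stA {x} U ↔ (x, y) ∈ ⋃ B ∈ U, B ×ˢ B := by
  simp only [stA, mem_sUnion, mem_ofPred_eq, inter_singleton_nonempty, mem_iUnion, mem_prod,
    exists_prop]
  exact ⟨fun ⟨B, ⟨hB, hx⟩, hy⟩ => ⟨B, hB, hx, hy⟩, fun ⟨B, hB, hx, hy⟩ => ⟨B, ⟨hB, hx⟩, hy⟩⟩

theorem sakoPropA_iff_propA_general (L : LSS X) :
    SakoPropA L ↔ PropA L := by
  constructor
  · intro h ε hε U hU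
    obtain ⟨S, ⟨V, hV, hSV⟩, A, hAS, hfin, hdiag, hineq⟩ :=
      h ε hε (⋃ B ∈ U, B ×ˢ B) ⟨U, hU, subset_rfl⟩
    exact ⟨V, hV, fun x => {q | (x, q.1, q.2) ∈ A}, hfin,
      fun x q hq => ⟨mem_stA_singleton_iff.2 (hSV (hAS _ hq)), trivial⟩, hdiag,
      fun x y hy => hineq x y (mem_stA_singleton_iff.1 hy)⟩
  · rintro h ε hε T ⟨U, hU, hTU⟩
    obtain ⟨V, hV, A, hfin, hsub, hdiag, hineq⟩ := h ε hε U hU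
    exact ⟨⋃ B ∈ V, B ×ˢ B, ⟨V, hV, subset_rfl⟩, {p | p.2 ∈ A p.1},
      fun p hp => mem_stA_singleton_iff.1 (hsub p.1 hp).1, hfin, hdiag,
      fun x y hxy => hineq x y (mem_stA_singleton_iff.2 (hTU hxy))⟩

/-- For a large scale space with bounded geometry, Sako's property A for the
induced coarse structure is equivalent to large scale property A. -/
theorem sakoPropA_iff_propA (L : LSS X) (hbg : BoundedGeometry L) :
    SakoPropA L ↔ PropA L :=
  sakoPropA_iff_propA_general L
end
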